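/- Under the combining setup with ψ of Stouffer type, assume that (ii) W_{n,M_n}^{[0]} diverges to +∞ in probability (that is, for every real C, P(W_{n,M_n}^{[0]} ≤ C) → 0 as n → ∞), and (iii) for every n, almost surely, for each j ∈ {1,…,r} the bootstrap replicates T_{n,j}^{[1]}, …, T_{n,j}^{[M_n]} are pairwise distinct. Then the global approximate p-value p_{n,M_n}(W_{n,M_n}^{[0]}) = (1/M_n) Σ_{k=1}^{M_n} 1(W_{n,M_n}^{[k]} ≥ W_{n,M_n}^{[0]}) converges to 0 in probability as n → ∞. -/

import Mathlib

open MeasureTheory ProbabilityTheory Filter Topology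

/-!
Without ties, for each coordinate `j` the ranks `#{l ∈ s | T k j ≤ T l j}`, `k ∈ s`, are distinct
positive integers, so at most `δ · #s` replicates have a `j`-th rank below `δ · #s`. Every other
replicate has all marginal p-values at least `δ / 2`, hence `W_k ≤ C := (∑ j, w j) · φ (δ / 2)`.
So when `W_0 > C`, at most `r δ #s` replicates satisfy `W_k ≥ W_0` and the global p-value is at
most `r δ`. Taking `r δ < ε`, the event `{ε ≤ p}` lies, up to the null set of ties, in
`{W_0 ≤ C}`, whose probability tends to `0` by (ii).
-/

section

open Finset

variable {ι α : Type*}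

lemma injOn_card_filter_le [LinearOrder α] {s : Finset ι} {t : ι → α} (ht : Set.InjOn t s) :
    Set.InjOn (fun k => #{l ∈ s | t k ≤ t l}) s := by
  have card_lt : ∀ k ∈ s, ∀ k' ∈ s, t k < t k' →
      #{l ∈ s | t k' ≤ t l} < #{l ∈ s | t k ≤ t l} := by
    intro k hk k' _ hlt
    refine card_lt_card ((ssubset_iff_of_subset ?_).2 ⟨k, ?_, ?_⟩)
    · exact monotone_filter_right s fun _ _ h => hlt.le.trans h
    · exact mem_filter.2 ⟨hk, le_rfl⟩
    · simpa using fun _ => hlt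
  intro k hk k' hk' heq
  rcases lt_trichotomy (t k) (t k') with hlt | hteq | hgt
  · exact absurd heq (card_lt k hk k' hk' hlt).ne'
  · exact ht hk hk' hteq
  · exact absurd heq (card_lt k' hk' k hk hgt).ne

lemma card_filter_natCast_lt_le {s : Finset ι} {c : ι → ℕ} (hc : Set.InjOn c s)
    (hpos : ∀ k ∈ s, 1 ≤ c k) {x : ℝ} (hx : 0 ≤ x) :
    (#{k ∈ s | (c k : ℝ) < x} : ℝ) ≤ x := by
  have hcard : #{k ∈ s | (c k : ℝ) < x} ≤ #(Icc 1 ⌊x⌋₊) := by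
    refine card_le_card_of_injOn c (fun k hk => ?_) (hc.mono fun k hk => (mem_filter.1 hk).1)
    obtain ⟨hks, hkx⟩ := mem_filter.1 hk
    exact mem_Icc.2 ⟨hpos k hks, Nat.le_floor hkx.le⟩
  calc (#{k ∈ s | (c k : ℝ) < x} : ℝ) ≤ ⌊x⌋₊ := by simpa using hcard
    _ ≤ x := Nat.floor_le hx

noncomputable def approxPValue (s : Finset ι) (t : ι → ℝ) (x : ℝ) : ℝ :=
  1 / ((#s : ℝ) + 1) * (1 / 2 + ∑ l ∈ s, if x ≤ t l then (1 : ℝ) else 0)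

lemma approxPValue_eq (s : Finset ι) (t : ι → ℝ) (x : ℝ) :
    approxPValue s t x = (1 / 2 + #{l ∈ s | x ≤ t l}) / (#s + 1) := by
  rw [approxPValue, sum_boole]
  ring

lemma approxPValue_lt_one (s : Finset ι) (t : ι → ℝ) (x : ℝ) : approxPValue s t x < 1 := by
  have hcard : (#{l ∈ s | x ≤ t l} : ℝ) ≤ #s := by exact_mod_cast card_filter_le _ _
  rw [approxPValue_eq, div_lt_one (by positivity)]
  linarith

lemma half_le_approxPValue {s : Finset ι} {t : ι → ℝ} {x δ : ℝ} (hδ : δ ≤ 1)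
    (h : δ * #s ≤ #{l ∈ s | x ≤ t l}) : δ / 2 ≤ approxPValue s t x := by
  rw [approxPValue_eq, le_div_iff₀ (by positivity)]
  have hs : (0 : ℝ) ≤ #s := by positivity
  nlinarith

variable {r : ℕ} {w : Fin r → ℝ} {φ : ℝ → ℝ} {s : Finset ι} {T : ι → Fin r → ℝ}

/-- The combined statistic `W^{[k]}` of the replicate `T k`, whose marginal p-values are taken
against the sample `T l`, `l ∈ s`; the index `k` need not lie in `s` (the observed statistic). -/
noncomputable def stoufferStat (w : Fin r → ℝ) (φ : ℝ → ℝ) (s : Finset ι)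
    (T : ι → Fin r → ℝ) (k : ι) : ℝ :=
  ∑ j, w j * φ (approxPValue s (fun l => T l j) (T k j))

noncomputable def globalPValue (w : Fin r → ℝ) (φ : ℝ → ℝ) (s : Finset ι)
    (T : ι → Fin r → ℝ) (x : ℝ) : ℝ :=
  1 / (#s : ℝ) * ∑ k ∈ s, if x ≤ stoufferStat w φ s T k then (1 : ℝ) else 0

lemma stoufferStat_le_of_le_approxPValue (hw : ∀ j, 0 ≤ w j)
    (hφ : AntitoneOn φ (Set.Ioo 0 1)) {k : ι} {a : ℝ} (ha : 0 < a)
    (h : ∀ j, a ≤ approxPValue s (fun l => T l j) (T k j)) :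
    stoufferStat w φ s T k ≤ (∑ j, w j) * φ a := by
  rw [stoufferStat, sum_mul]
  refine sum_le_sum fun j _ => mul_le_mul_of_nonneg_left ?_ (hw j)
  have hp := approxPValue_lt_one s (fun l => T l j) (T k j)
  exact hφ ⟨ha, (h j).trans_lt hp⟩ ⟨ha.trans_le (h j), hp⟩ (h j)

lemma card_filter_le_stoufferStat_le (hw : ∀ j, 0 ≤ w j) (hφ : AntitoneOn φ (Set.Ioo 0 1))
    (hT : ∀ j, Set.InjOn (fun k => T k j) s) {δ x : ℝ} (hδ0 : 0 < δ) (hδ1 : δ ≤ 1)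
    (hx : (∑ j, w j) * φ (δ / 2) < x) :
    (#{k ∈ s | x ≤ stoufferStat w φ s T k} : ℝ) ≤ r * (δ * #s) := by
  classical
  set low : Fin r → Finset ι := fun j => {k ∈ s | (#{l ∈ s | T k j ≤ T l j} : ℝ) < δ * #s}
  have hsub : {k ∈ s | x ≤ stoufferStat w φ s T k} ⊆ univ.biUnion low := by
    intro k hk
    obtain ⟨hks, hxk⟩ := mem_filter.1 hk
    by_contra hnot
    simp only [low, mem_biUnion, mem_univ, mem_filter, true_and, not_exists, not_and,
      not_lt] at hnot
    have hle := stoufferStat_le_of_le_approxPValue hw hφ (half_pos hδ0)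
      fun j => half_le_approxPValue hδ1 (hnot j hks)
    linarith
  have hlow : ∀ j, (#(low j) : ℝ) ≤ δ * #s := fun j =>
    card_filter_natCast_lt_le (injOn_card_filter_le (hT j))
      (fun k hk => card_pos.2 ⟨k, mem_filter.2 ⟨hk, le_rfl⟩⟩) (by positivity)
  calc (#{k ∈ s | x ≤ stoufferStat w φ s T k} : ℝ) ≤ ∑ j, (#(low j) : ℝ) := by
        exact_mod_cast (card_le_card hsub).trans card_biUnion_le
    _ ≤ ∑ _j : Fin r, δ * #s := sum_le_sum fun j _ => hlow j
    _ = r * (δ * #s) := by simp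

lemma globalPValue_le (hw : ∀ j, 0 ≤ w j) (hφ : AntitoneOn φ (Set.Ioo 0 1))
    (hT : ∀ j, Set.InjOn (fun k => T k j) s) {δ x : ℝ} (hδ0 : 0 < δ) (hδ1 : δ ≤ 1)
    (hx : (∑ j, w j) * φ (δ / 2) < x) :
    globalPValue w φ s T x ≤ r * δ := by
  rw [globalPValue, sum_boole]
  calc 1 / (#s : ℝ) * #{k ∈ s | x ≤ stoufferStat w φ s T k}
      ≤ 1 / #s * (r * (δ * #s)) := by
        gcongr
        exact card_filter_le_stoufferStat_le hw hφ hT hδ0 hδ1 hx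
    _ = r * δ * (#s / #s) := by ring
    _ ≤ r * δ := mul_le_of_le_one_right (by positivity) (div_self_le_one _)

end

theorem stmt6_general
    {Ω : Type*} [MeasurableSpace Ω] (P : Measure Ω)
    (r : ℕ)
    (Trep : ℕ → ℕ → Ω → (Fin r → ℝ))
    (M : ℕ → ℕ)
    -- ψ of Stouffer type
    (w : Fin r → ℝ) (hw : ∀ j, 0 < w j)
    (φ : ℝ → ℝ)
    (hφanti : StrictAntiOn φ (Set.Ioo (0 : ℝ) 1))
    -- (ii) W_{n,M_n}^{[0]} diverges to +∞ in probability
    (hWdiv : ∀ C : ℝ,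
        Tendsto (fun n => P {ω |
            (∑ j, w j * φ ((1 / ((M n : ℝ) + 1)) * (1 / 2 + ∑ l ∈ Finset.Icc 1 (M n),
                if Trep n 0 ω j ≤ Trep n l ω j then (1 : ℝ) else 0))) ≤ C})
          atTop (𝓝 0))
    -- (iii) no ties among the bootstrap replicates
    (hties : ∀ n, ∀ᵐ ω ∂P, ∀ j : Fin r, ∀ k ∈ Finset.Icc 1 (M n), ∀ l ∈ Finset.Icc 1 (M n),
        k ≠ l → Trep n k ω j ≠ Trep n l ω j) :
    ∀ ε : ℝ, 0 < ε →
      Tendsto (fun n => P {ω | ε ≤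
          (1 / (M n : ℝ)) * (∑ k ∈ Finset.Icc 1 (M n),
            if (∑ j, w j * φ ((1 / ((M n : ℝ) + 1)) * (1 / 2 + ∑ l ∈ Finset.Icc 1 (M n),
                  if Trep n 0 ω j ≤ Trep n l ω j then (1 : ℝ) else 0)))
                ≤ (∑ j, w j * φ ((1 / ((M n : ℝ) + 1)) * (1 / 2 + ∑ l ∈ Finset.Icc 1 (M n),
                  if Trep n k ω j ≤ Trep n l ω j then (1 : ℝ) else 0)))
              then (1 : ℝ) else 0)})
        atTop (𝓝 0) := by
  intro ε hε
  obtain ⟨δ, hδ0, hδ1, hrδ⟩ : ∃ δ : ℝ, 0 < δ ∧ δ ≤ 1 ∧ r * δ < ε := by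
    obtain ⟨c, hc0, hrc⟩ := exists_pos_mul_lt hε (r : ℝ)
    exact ⟨min c 1, lt_min hc0 one_pos, min_le_right c 1,
      lt_of_le_of_lt (by gcongr; exact min_le_left c 1) hrc⟩
  refine tendsto_of_tendsto_of_tendsto_of_le_of_le tendsto_const_nhds
    (hWdiv ((∑ j, w j) * φ (δ / 2))) (fun n => zero_le) fun n => measure_mono_ae ?_
  filter_upwards [hties n] with ω hω (hεω : ε ≤ _)
  show _ ≤ (∑ j, w j) * φ (δ / 2)
  have hinj : ∀ j, Set.InjOn (fun k => Trep n k ω j) (Finset.Icc 1 (M n)) :=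
    fun j k hk l hl heq => by_contra fun hne => hω j k hk l hl hne heq
  have hp : ε ≤ globalPValue w φ (Finset.Icc 1 (M n)) (fun k => Trep n k ω)
      (stoufferStat w φ (Finset.Icc 1 (M n)) (fun k => Trep n k ω) 0) := by
    simpa only [globalPValue, stoufferStat, approxPValue, Nat.card_Icc,
      add_tsub_cancel_right] using hεω
  have hW0 : stoufferStat w φ (Finset.Icc 1 (M n)) (fun k => Trep n k ω) 0
      ≤ (∑ j, w j) * φ (δ / 2) := le_of_not_gt fun hC =>
    (hp.trans (globalPValue_le (fun j => (hw j).le) hφanti.antitoneOn hinj hδ0 hδ1 hC)).not_gt hrδ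
  simpa only [stoufferStat, approxPValue, Nat.card_Icc, add_tsub_cancel_right] using hW0

/-- In the combining setup with a Stouffer-type combining function
`ψ(p_1,…,p_r) = Σ_j w_j φ(p_j)` (`w_j > 0`, `φ : (0,1) → ℝ` decreasing, non-negative on
`(0,1/2)` and a bijection onto `ℝ`), if (ii) `W_{n,M_n}^{[0]}` diverges to `+∞` in
probability and (iii) for every `n`, almost surely and for each `j`, the bootstrap
replicates `T_{n,j}^{[1]}, …, T_{n,j}^{[M_n]}` are pairwise distinct, then the global
approximate p-value
`p_{n,M_n}(W_{n,M_n}^{[0]}) = (1/M_n) Σ_{k=1}^{M_n} 1(W_{n,M_n}^{[k]} ≥ W_{n,M_n}^{[0]})`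
converges to `0` in probability. -/
theorem stmt6
    {Ω : Type*} [MeasurableSpace Ω] (P : Measure Ω) [IsProbabilityMeasure P]
    (r : ℕ) (hr : 1 ≤ r)
    (𝒳 𝒱 : ℕ → Type*) [∀ n, MeasurableSpace (𝒳 n)] [∀ n, MeasurableSpace (𝒱 n)]
    (X : ∀ n, Ω → 𝒳 n) (hXmeas : ∀ n, Measurable (X n))
    (ν : ∀ n, Measure (𝒱 n)) [∀ n, IsProbabilityMeasure (ν n)]
    (V : ∀ n, ℕ → Ω → 𝒱 n) (hVmeas : ∀ n i, Measurable (V n i))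
    (hVlaw : ∀ n i, 1 ≤ i → Measure.map (V n i) P = ν n)
    (hViid : ∀ n, iIndepFun
        (fun i => V n (i + 1)) P)
    (hVindepX : ∀ n, IndepFun (X n) (fun ω (i : ℕ) => V n (i + 1) ω) P)
    (f : ∀ n, 𝒳 n → (Fin r → ℝ)) (hf : ∀ n, Measurable (f n))
    (g : ∀ n, 𝒳 n × 𝒱 n → (Fin r → ℝ)) (hg : ∀ n, Measurable (g n))
    (Trep : ℕ → ℕ → Ω → (Fin r → ℝ))
    (hTrep : ∀ n i ω, Trep n i ω = if i = 0 then f n (X n ω) else g n (X n ω, V n i ω))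
    (M : ℕ → ℕ) (hM : ∀ n, 1 ≤ M n) (hMtop : Tendsto M atTop atTop)
    -- ψ of Stouffer type
    (w : Fin r → ℝ) (hw : ∀ j, 0 < w j)
    (φ : ℝ → ℝ)
    (hφanti : StrictAntiOn φ (Set.Ioo (0 : ℝ) 1))
    (hφnonneg : ∀ x ∈ Set.Ioo (0 : ℝ) (1 / 2), 0 ≤ φ x)
    (hφbij : Set.BijOn φ (Set.Ioo (0 : ℝ) 1) Set.univ)
    -- (ii) W_{n,M_n}^{[0]} diverges to +∞ in probability
    (hWdiv : ∀ C : ℝ,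
        Tendsto (fun n => P {ω |
            (∑ j, w j * φ ((1 / ((M n : ℝ) + 1)) * (1 / 2 + ∑ l ∈ Finset.Icc 1 (M n),
                if Trep n 0 ω j ≤ Trep n l ω j then (1 : ℝ) else 0))) ≤ C})
          atTop (𝓝 0))
    -- (iii) no ties among the bootstrap replicates
    (hties : ∀ n, ∀ᵐ ω ∂P, ∀ j : Fin r, ∀ k ∈ Finset.Icc 1 (M n), ∀ l ∈ Finset.Icc 1 (M n),
        k ≠ l → Trep n k ω j ≠ Trep n l ω j) :
    ∀ ε : ℝ, 0 < ε →
      Tendsto (fun n => P {ω | ε ≤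
          (1 / (M n : ℝ)) * (∑ k ∈ Finset.Icc 1 (M n),
            if (∑ j, w j * φ ((1 / ((M n : ℝ) + 1)) * (1 / 2 + ∑ l ∈ Finset.Icc 1 (M n),
                  if Trep n 0 ω j ≤ Trep n l ω j then (1 : ℝ) else 0)))
                ≤ (∑ j, w j * φ ((1 / ((M n : ℝ) + 1)) * (1 / 2 + ∑ l ∈ Finset.Icc 1 (M n),
                  if Trep n k ω j ≤ Trep n l ω j then (1 : ℝ) else 0)))
              then (1 : ℝ) else 0)})
        atTop (𝓝 0) :=
  stmt6_general P r Trep M w hw φ hφanti hWdiv hties
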